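/- Define σ_m² = 4π² Σ_{ℓ=0}^{m} [ ((2m−2ℓ+1)!!(2ℓ−1)!!/(2m+2)!!)² + ((2m−2ℓ−1)!!(2ℓ+1)!!/(2m+2)!!)² ]. Then σ_m² ∼ 8π² ((2m+1)!!/(2m+2)!!)² ∼ 8π/m as m → ∞ (i.e., m·σ_m² → 8π). -/

import Mathlib

open Nat Filter Topology

/-! The `ℓ`-th summand of the second sum in `σ_m²` is the `(ℓ + 1)`-st summand of the first one
(and its last summand is the `0`-th one), so `σ_m² = 8π² Σ_ℓ a_{m,ℓ}²` with
`a_{m,ℓ} = (2m−2ℓ+1)‼(2ℓ−1)‼/(2m+2)‼`. Since `(2j+1)‼(2k+1)‼ ≤ (2(j+k)+1)‼`, every term with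
`ℓ ≥ 1` satisfies `(2m+1) a_{m,ℓ} ≤ a_{m,0}`, so the `m` terms with `ℓ ≥ 1` contribute at most
`a_{m,0}²/(m+1)` and the sum is `a_{m,0}² (1 + O(1/m))`. Finally `a_{m,0} = (2m+1)‼/(2m+2)‼`, and
Wallis' product gives `m a_{m,0}² → 1/π`. -/

/-- `σ_m² = 4π² Σ_{ℓ=0}^{m} [((2m−2ℓ+1)‼(2ℓ−1)‼/(2m+2)‼)² + ((2m−2ℓ−1)‼(2ℓ+1)‼/(2m+2)‼)²]`
(double factorials, with the convention `(−1)‼ = 1` realized by truncated subtraction). -/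
noncomputable def sigmaSq (m : ℕ) : ℝ :=
  4 * Real.pi ^ 2 * ∑ ℓ ∈ Finset.range (m + 1),
    (((((2 * m - 2 * ℓ + 1)‼ * (2 * ℓ - 1)‼ : ℕ) : ℝ) / ((2 * m + 2)‼ : ℝ)) ^ 2 +
     ((((2 * m - 2 * ℓ - 1)‼ * (2 * ℓ + 1)‼ : ℕ) : ℝ) / ((2 * m + 2)‼ : ℝ)) ^ 2)

theorem Nat.doubleFactorial_odd_mul_le (j k : ℕ) :
    (2 * j + 1)‼ * (2 * k + 1)‼ ≤ (2 * (j + k) + 1)‼ := by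
  induction j with
  | zero => simp
  | succ j ih =>
    rw [show 2 * (j + 1) + 1 = 2 * j + 1 + 2 by ring,
      show 2 * (j + 1 + k) + 1 = 2 * (j + k) + 1 + 2 by ring,
      doubleFactorial_add_two, doubleFactorial_add_two, mul_assoc]
    exact Nat.mul_le_mul (by omega) ih

theorem Real.Wallis.W_eq_doubleFactorial (m : ℕ) :
    W m = (2 * m + 1) * (((2 * m)‼ : ℝ) / (2 * m + 1)‼) ^ 2 := by
  induction m with
  | zero => simp [W]
  | succ m ih =>
    rw [W_succ, ih, show 2 * (m + 1) = 2 * m + 2 by ring,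
      show 2 * m + 2 + 1 = 2 * m + 1 + 2 by ring, doubleFactorial_add_two, doubleFactorial_add_two]
    have := (doubleFactorial_pos (2 * m + 1)).ne'
    push_cast
    field_simp
    ring

theorem tendsto_mul_sq_doubleFactorial_odd_div_even :
    Tendsto (fun m : ℕ ↦ m * (((2 * m + 1)‼ : ℝ) / (2 * m + 2)‼) ^ 2) atTop (𝓝 Real.pi⁻¹) := by
  have hwallis (m : ℕ) : m * (((2 * m + 1)‼ : ℝ) / (2 * m + 2)‼) ^ 2 =
      m / (m + 1) * ((1 + 2 * m) / (2 + 2 * m)) / (2 * Real.Wallis.W m) := by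
    rw [Real.Wallis.W_eq_doubleFactorial, doubleFactorial_add_two]
    have := (doubleFactorial_pos (2 * m)).ne'
    have := (doubleFactorial_pos (2 * m + 1)).ne'
    push_cast
    field_simp
    ring
  have hlim := ((tendsto_natCast_div_add_atTop (1 : ℝ)).mul
    (tendsto_add_mul_div_add_mul_atTop_nhds (1 : ℝ) 2 2 two_ne_zero)).div
    (Real.Wallis.tendsto_W_nhds_pi_div_two.const_mul 2) (by positivity)
  rw [show Real.pi⁻¹ = 1 * (2 / 2) / (2 * (Real.pi / 2)) by field_simp]
  exact hlim.congr fun m ↦ (hwallis m).symm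

noncomputable def sigmaTerm (m ℓ : ℕ) : ℝ :=
  (((2 * m - 2 * ℓ + 1)‼ * (2 * ℓ - 1)‼ : ℕ) : ℝ) / ((2 * m + 2)‼ : ℝ)

theorem sigmaTerm_pos (m ℓ : ℕ) : 0 < sigmaTerm m ℓ := by
  unfold sigmaTerm
  have := doubleFactorial_pos (2 * m - 2 * ℓ + 1)
  have := doubleFactorial_pos (2 * ℓ - 1)
  have := doubleFactorial_pos (2 * m + 2)
  positivity

theorem sigmaTerm_zero (m : ℕ) : sigmaTerm m 0 = ((2 * m + 1)‼ : ℝ) / (2 * m + 2)‼ := by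
  simp [sigmaTerm]

theorem mul_sigmaTerm_le {m ℓ : ℕ} (h1 : 1 ≤ ℓ) (h2 : ℓ ≤ m) :
    (2 * m + 1) * sigmaTerm m ℓ ≤ sigmaTerm m 0 := by
  obtain ⟨k, rfl⟩ : ∃ k, ℓ = k + 1 := ⟨ℓ - 1, by omega⟩
  obtain ⟨j, rfl⟩ : ∃ j, m = j + k + 1 := ⟨m - (k + 1), by omega⟩
  have hnat : (2 * (j + k + 1) + 1) * ((2 * j + 1)‼ * (2 * k + 1)‼) ≤ (2 * (j + k + 1) + 1)‼ := by
    rw [show 2 * (j + k + 1) + 1 = 2 * (j + k) + 1 + 2 by ring, doubleFactorial_add_two]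
    exact Nat.mul_le_mul_left _ (doubleFactorial_odd_mul_le j k)
  rw [sigmaTerm_zero, sigmaTerm, ← mul_div_assoc]
  gcongr
  rw [show 2 * (j + k + 1) - 2 * (k + 1) + 1 = 2 * j + 1 by omega,
    show 2 * (k + 1) - 1 = 2 * k + 1 by omega]
  exact_mod_cast hnat

theorem sigmaSq_eq_sum (m : ℕ) :
    sigmaSq m = 8 * Real.pi ^ 2 * ∑ ℓ ∈ Finset.range (m + 1), sigmaTerm m ℓ ^ 2 := by
  have hsecond : ∑ ℓ ∈ Finset.range (m + 1),
      ((((2 * m - 2 * ℓ - 1)‼ * (2 * ℓ + 1)‼ : ℕ) : ℝ) / ((2 * m + 2)‼ : ℝ)) ^ 2 =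
      ∑ ℓ ∈ Finset.range (m + 1), sigmaTerm m ℓ ^ 2 := by
    rw [Finset.sum_range_succ, Finset.sum_range_succ' (fun ℓ ↦ sigmaTerm m ℓ ^ 2)]
    congr 1
    · refine Finset.sum_congr rfl fun ℓ hℓ ↦ ?_
      have := Finset.mem_range.1 hℓ
      rw [sigmaTerm, show 2 * m - 2 * (ℓ + 1) + 1 = 2 * m - 2 * ℓ - 1 by omega,
        show 2 * (ℓ + 1) - 1 = 2 * ℓ + 1 by omega]
    · simp [sigmaTerm, mul_comm]
  rw [sigmaSq, Finset.sum_add_distrib, hsecond]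
  simp only [sigmaTerm]
  ring

theorem sq_sigmaTerm_zero_le_sum (m : ℕ) :
    sigmaTerm m 0 ^ 2 ≤ ∑ ℓ ∈ Finset.range (m + 1), sigmaTerm m ℓ ^ 2 :=
  Finset.single_le_sum (fun ℓ _ ↦ sq_nonneg (sigmaTerm m ℓ)) (by simp)

theorem sum_sq_sigmaTerm_le (m : ℕ) :
    ∑ ℓ ∈ Finset.range (m + 1), sigmaTerm m ℓ ^ 2 ≤ (1 + 1 / (m + 1)) * sigmaTerm m 0 ^ 2 := by
  have hterm (ℓ : ℕ) (hℓ : ℓ ∈ Finset.range m) :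
      sigmaTerm m (ℓ + 1) ^ 2 ≤ (sigmaTerm m 0 / (2 * m + 1)) ^ 2 := by
    have := Finset.mem_range.1 hℓ
    refine pow_le_pow_left₀ (sigmaTerm_pos m _).le ?_ 2
    rw [le_div_iff₀' (by positivity)]
    exact mul_sigmaTerm_le (by omega) (by omega)
  have hcoef : (m : ℝ) / (2 * m + 1) ^ 2 ≤ 1 / (m + 1) := by
    rw [div_le_div_iff₀ (by positivity) (by positivity)]
    nlinarith
  calc ∑ ℓ ∈ Finset.range (m + 1), sigmaTerm m ℓ ^ 2
      = sigmaTerm m 0 ^ 2 + ∑ ℓ ∈ Finset.range m, sigmaTerm m (ℓ + 1) ^ 2 := by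
        rw [Finset.sum_range_succ', add_comm]
    _ ≤ sigmaTerm m 0 ^ 2 + ∑ _ℓ ∈ Finset.range m, (sigmaTerm m 0 / (2 * m + 1)) ^ 2 :=
        add_le_add_right (Finset.sum_le_sum hterm) _
    _ = sigmaTerm m 0 ^ 2 + m / (2 * m + 1) ^ 2 * sigmaTerm m 0 ^ 2 := by
        simp only [Finset.sum_const, Finset.card_range, nsmul_eq_mul, div_pow]
        ring
    _ ≤ (1 + 1 / (m + 1)) * sigmaTerm m 0 ^ 2 := by
        nlinarith [sq_nonneg (sigmaTerm m 0)]

theorem tendsto_sum_sq_sigmaTerm_div :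
    Tendsto (fun m : ℕ ↦ (∑ ℓ ∈ Finset.range (m + 1), sigmaTerm m ℓ ^ 2) / sigmaTerm m 0 ^ 2)
      atTop (𝓝 1) := by
  have hupper : Tendsto (fun m : ℕ ↦ 1 + 1 / ((m : ℝ) + 1)) atTop (𝓝 1) := by
    simpa using tendsto_one_div_add_atTop_nhds_zero_nat.const_add (1 : ℝ)
  refine tendsto_of_tendsto_of_tendsto_of_le_of_le tendsto_const_nhds hupper (fun m ↦ ?_) fun m ↦ ?_
  · exact (one_le_div (pow_pos (sigmaTerm_pos m 0) 2)).2 (sq_sigmaTerm_zero_le_sum m)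
  · exact (div_le_iff₀ (pow_pos (sigmaTerm_pos m 0) 2)).2 (sum_sq_sigmaTerm_le m)

/-- `σ_m² ∼ 8π² ((2m+1)‼/(2m+2)‼)² ∼ 8π/m` as `m → ∞`. -/
theorem sigmaSq_asymptotic :
    Tendsto (fun m : ℕ =>
      sigmaSq m / (8 * Real.pi ^ 2 * (((2 * m + 1)‼ : ℝ) / ((2 * m + 2)‼ : ℝ)) ^ 2))
      atTop (nhds 1) ∧
    Tendsto (fun m : ℕ => (m : ℝ) * sigmaSq m) atTop (nhds (8 * Real.pi)) := by
  have hratio (m : ℕ) :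
      sigmaSq m / (8 * Real.pi ^ 2 * (((2 * m + 1)‼ : ℝ) / ((2 * m + 2)‼ : ℝ)) ^ 2) =
        (∑ ℓ ∈ Finset.range (m + 1), sigmaTerm m ℓ ^ 2) / sigmaTerm m 0 ^ 2 := by
    rw [sigmaSq_eq_sum, ← sigmaTerm_zero, mul_div_mul_left _ _ (by positivity)]
  have hscaled (m : ℕ) : (m : ℝ) * sigmaSq m = 8 * Real.pi ^ 2 *
      (m * (((2 * m + 1)‼ : ℝ) / (2 * m + 2)‼) ^ 2 *
        ((∑ ℓ ∈ Finset.range (m + 1), sigmaTerm m ℓ ^ 2) / sigmaTerm m 0 ^ 2)) := by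
    have := (sigmaTerm_pos m 0).ne'
    rw [sigmaSq_eq_sum, ← sigmaTerm_zero]
    field_simp
  refine ⟨by simpa only [hratio] using tendsto_sum_sq_sigmaTerm_div, ?_⟩
  simp_rw [hscaled]
  convert (tendsto_mul_sq_doubleFactorial_odd_div_even.mul tendsto_sum_sq_sigmaTerm_div).const_mul
    (8 * Real.pi ^ 2) using 2
  field_simp
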